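/- arXiv:1607.04131 — 5 statements merged into one kernel-verified Lean document; each statement's English description precedes it below -/
import Mathlib

section
/- Let k be an uncountable algebraically closed field, let A be a k-algebra with dim_k(A) < |k|, and let F be an algebraically closed field extension of k with |F| = |k|. Then there is a ring isomorphism A ⊗_k F ≅ A which maps the subfield F = k ⊗_k F of A ⊗_k F bijectively onto the subfield k of A. -/
/-!
Fix a `k`-basis `(b i)` of `A` and let `k₀ ⊆ k` be the subfield generated by the structure
constants of `A` in this basis; `|k₀| ≤ max (dim A) ℵ₀ < |k|`. Over `k₀`, both `F` and `k` are
algebraically closed of transcendence degree `|k|`, so there is a field isomorphism `σ : F ≃ k`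
fixing `k₀`. The `F`-algebra `F ⊗ A` has basis `1 ⊗ b i` with the same structure constants, which
`σ` fixes, so the `σ`-semilinear bijection `f ⊗ b i ↦ σ f • b i` is a ring isomorphism; it maps
`F ⊗ 1` onto `k`.
-/

open scoped TensorProduct
open Cardinal

universe u

namespace IsAlgClosed

theorem cardinal_eq_cardinal_transcendence_basis_of_lt {R K ι : Type u} [CommRing R]
    [Nontrivial R] [Field K] [Algebra R K] [IsAlgClosed K] {v : ι → K}
    (hv : IsTranscendenceBasis R v) (hR : #R < #K) (hK : ℵ₀ < #K) : #ι = #K :=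
  le_antisymm (mk_le_of_injective hv.1.injective) <| le_of_not_gt fun hι =>
    (cardinal_le_max_transcendence_basis' v hv).not_gt (max_lt (max_lt hR hι) hK)

noncomputable def algEquivOfTranscendenceBasis {R K L ι κ : Type*} [CommRing R] [Field K]
    [Algebra R K] [Field L] [Algebra R L] [IsAlgClosed K] [IsAlgClosed L] {v : ι → K} {w : κ → L}
    (e : ι ≃ κ) (hv : IsTranscendenceBasis R v) (hw : IsTranscendenceBasis R w) : K ≃ₐ[R] L :=
  letI := isAlgClosure_of_transcendence_basis v hv
  letI := isAlgClosure_of_transcendence_basis w hw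
  let e₀ : Algebra.adjoin R (Set.range v) ≃ₐ[R] Algebra.adjoin R (Set.range w) :=
    (hv.1.aevalEquiv.symm.trans (MvPolynomial.renameEquiv R e)).trans hw.1.aevalEquiv
  AlgEquiv.ofRingEquiv (f := IsAlgClosure.equivOfEquiv K L e₀.toRingEquiv) fun r => by
    rw [IsScalarTower.algebraMap_apply R (Algebra.adjoin R (Set.range v)) K,
      IsAlgClosure.equivOfEquiv_algebraMap, AlgEquiv.coe_ringEquiv, AlgEquiv.commutes,
      ← IsScalarTower.algebraMap_apply]

theorem nonempty_algEquiv_of_cardinal_eq {R K L : Type u} [CommRing R] [Field K] [Algebra R K]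
    [FaithfulSMul R K] [Field L] [Algebra R L] [FaithfulSMul R L] [IsAlgClosed K]
    [IsAlgClosed L] (hR : #R < #K) (hK : ℵ₀ < #K) (hKL : #K = #L) : Nonempty (K ≃ₐ[R] L) := by
  have := (algebraMap R K).domain_nontrivial
  obtain ⟨s, hs⟩ := exists_isTranscendenceBasis R K
  obtain ⟨t, ht⟩ := exists_isTranscendenceBasis R L
  have hst : #s = #t := by
    rw [cardinal_eq_cardinal_transcendence_basis_of_lt hs hR hK,
      cardinal_eq_cardinal_transcendence_basis_of_lt ht (hKL ▸ hR) (hKL ▸ hK), hKL]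
  obtain ⟨e⟩ := Cardinal.eq.1 hst
  exact ⟨algEquivOfTranscendenceBasis e hs ht⟩

theorem exists_ringEquiv_apply_algebraMap_eq {k F : Type u} [Field k] [IsAlgClosed k] [Field F]
    [Algebra k F] [IsAlgClosed F] (S : Set k) (hS : #(Subfield.closure S) < #k)
    (hk : ℵ₀ < #k) (hF : #F = #k) : ∃ σ : F ≃+* k, ∀ c ∈ S, σ (algebraMap k F c) = c := by
  obtain ⟨σ⟩ := nonempty_algEquiv_of_cardinal_eq (K := F) (L := k) (hF ▸ hS) (hF ▸ hk) hF
  exact ⟨σ, fun c hc => σ.commutes ⟨c, Subfield.subset_closure hc⟩⟩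

end IsAlgClosed

namespace Module.Basis

def structureConstants {ι k A : Type*} [CommRing k] [Ring A] [Algebra k A]
    (b : Basis ι k A) : Set k :=
  Set.range fun p : ι × ι × ι => b.repr (b p.1 * b p.2.1) p.2.2

theorem cardinalMk_structureConstants_lt {ι k A : Type u} [CommRing k] [Ring A] [Algebra k A]
    (b : Basis ι k A) {c : Cardinal.{u}} (hc : ℵ₀ ≤ c) (hι : #ι < c) :
    #b.structureConstants < c :=
  mk_range_le.trans_lt <| by
    rw [mk_prod, mk_prod, lift_id, lift_id]
    exact mul_lt_of_lt hc hι (mul_lt_of_lt hc hι hι)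

section BaseChange

variable {ι k A : Type*} [CommRing k] [Ring A] [Algebra k A] (b : Basis ι k A)
variable {F : Type*} [CommRing F] [Algebra k F] (σ : F ≃+* k)

/-- The `σ`-semilinear bijection `f ⊗ b i ↦ σ f • b i`. -/
noncomputable def baseChangeAddEquiv : F ⊗[k] A ≃+ A :=
  (Algebra.TensorProduct.basis F b).repr.toAddEquiv.trans
    ((Finsupp.mapRange.addEquiv σ.toAddEquiv).trans b.repr.symm.toAddEquiv)

theorem baseChangeAddEquiv_apply (x : F ⊗[k] A) :
    b.baseChangeAddEquiv σ x = b.repr.symm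
      (Finsupp.mapRange σ (map_zero σ) ((Algebra.TensorProduct.basis F b).repr x)) :=
  rfl

theorem baseChangeAddEquiv_smul (f : F) (x : F ⊗[k] A) :
    b.baseChangeAddEquiv σ (f • x) = σ f • b.baseChangeAddEquiv σ x := by
  rw [baseChangeAddEquiv_apply, baseChangeAddEquiv_apply, ← map_smul b.repr.symm]
  congr 1
  ext l
  simp

theorem baseChangeAddEquiv_one_tmul {a : A}
    (ha : ∀ l, σ (algebraMap k F (b.repr a l)) = b.repr a l) :
    b.baseChangeAddEquiv σ (1 ⊗ₜ a) = a := by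
  rw [baseChangeAddEquiv_apply, LinearEquiv.symm_apply_eq]
  ext l
  simp [ha]

theorem baseChangeAddEquiv_map_mul (hσ : ∀ c ∈ b.structureConstants, σ (algebraMap k F c) = c)
    (x y : F ⊗[k] A) :
    b.baseChangeAddEquiv σ (x * y) = b.baseChangeAddEquiv σ x * b.baseChangeAddEquiv σ y := by
  set bF := Algebra.TensorProduct.basis F b
  have hbasis : ∀ i, b.baseChangeAddEquiv σ (bF i) = b i := fun i => by
    rw [Algebra.TensorProduct.basis_apply]
    refine b.baseChangeAddEquiv_one_tmul σ fun l => ?_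
    classical
    rw [b.repr_self, Finsupp.single_apply]
    split_ifs <;> simp
  have hmul : ∀ i j, b.baseChangeAddEquiv σ (bF i * bF j) = b i * b j := fun i j => by
    rw [Algebra.TensorProduct.basis_apply, Algebra.TensorProduct.basis_apply,
      Algebra.TensorProduct.tmul_mul_tmul, one_mul]
    exact b.baseChangeAddEquiv_one_tmul σ fun l => hσ _ ⟨(i, j, l), rfl⟩
  induction bF.mem_span x using Submodule.span_induction generalizing y with
  | mem x hx =>
    obtain ⟨i, rfl⟩ := hx
    induction bF.mem_span y using Submodule.span_induction with
    | mem y hy => obtain ⟨j, rfl⟩ := hy; rw [hmul, hbasis, hbasis]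
    | zero => simp
    | add y z _ _ hy hz => rw [mul_add, map_add, map_add, hy, hz, mul_add]
    | smul f y _ hy =>
      rw [mul_smul_comm, baseChangeAddEquiv_smul, baseChangeAddEquiv_smul, hy, mul_smul_comm]
  | zero => simp
  | add x z _ _ hx hz => rw [add_mul, map_add, map_add, hx, hz, add_mul]
  | smul f x _ hx =>
    rw [smul_mul_assoc, baseChangeAddEquiv_smul, baseChangeAddEquiv_smul, hx, smul_mul_assoc]

noncomputable def baseChangeRingEquiv
    (hσ : ∀ c ∈ b.structureConstants, σ (algebraMap k F c) = c) : F ⊗[k] A ≃+* A :=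
  { b.baseChangeAddEquiv σ with map_mul' := b.baseChangeAddEquiv_map_mul σ hσ }

theorem baseChangeRingEquiv_tmul_one
    (hσ : ∀ c ∈ b.structureConstants, σ (algebraMap k F c) = c) (f : F) :
    b.baseChangeRingEquiv σ hσ (f ⊗ₜ 1) = algebraMap k A (σ f) :=
  calc b.baseChangeRingEquiv σ hσ (f ⊗ₜ 1) = b.baseChangeAddEquiv σ (f • 1) := by
        rw [Algebra.TensorProduct.one_def, TensorProduct.smul_tmul', smul_eq_mul, mul_one]; rfl
    _ = σ f • b.baseChangeRingEquiv σ hσ 1 := b.baseChangeAddEquiv_smul σ f 1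
    _ = algebraMap k A (σ f) := by rw [map_one, Algebra.algebraMap_eq_smul_one]

end BaseChange

end Module.Basis

/-- if `k` is an uncountable algebraically closed field, `A` a `k`-algebra with
`dim_k A < |k|`, and `F` an algebraically closed field extension of `k` with `|F| = |k|`, then
`A ⊗[k] F ≅ A` as rings, with the subfield `k ⊗[k] F = F` mapped bijectively onto the
subfield `k ⊆ A`. -/
theorem stmt0 (k A F : Type u) [Field k] [IsAlgClosed k] [Ring A] [Algebra k A]
    [Field F] [Algebra k F] [IsAlgClosed F]
    (hk : Cardinal.aleph0 < Cardinal.mk k)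
    (hA : Module.rank k A < Cardinal.mk k)
    (hF : Cardinal.mk F = Cardinal.mk k) :
    ∃ e : (A ⊗[k] F) ≃+* A,
      e '' (Set.range fun f : F => (1 : A) ⊗ₜ[k] f) = Set.range (algebraMap k A) := by
  let b := Module.Basis.ofVectorSpace k A
  have hb : #b.structureConstants < #k :=
    b.cardinalMk_structureConstants_lt hk.le (b.mk_eq_rank''.trans_lt hA)
  obtain ⟨σ, hσ⟩ := IsAlgClosed.exists_ringEquiv_apply_algebraMap_eq b.structureConstants
    ((Subfield.cardinalMk_closure_le_max _).trans_lt (max_lt hb hk)) hk hF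
  refine ⟨(Algebra.TensorProduct.comm k A F).toRingEquiv.trans (b.baseChangeRingEquiv σ hσ), ?_⟩
  rw [← Set.range_comp, ← σ.surjective.range_comp]
  exact congrArg Set.range (funext (b.baseChangeRingEquiv_tmul_one σ hσ))
end

section
/- Let V be a vector space over a field k and let T : V → V be a linear map. Suppose there is an increasing chain of finite-dimensional T-invariant subspaces V₁ ⊆ V₂ ⊆ ... whose union is V, and suppose k is algebraically closed. Then V admits a basis v₀, v₁, v₂, ... (indexed by an initial segment of the ordinals, or ℕ if V is countable-dimensional) with respect to which T is triangular, i.e., T(vᵢ) ∈ span(v₀, ..., vᵢ) for all i. -/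
/-!
Build the basis greedily. Given the span `U` of the vectors chosen so far (finite dimensional and
`T`-invariant), let `W n` be the first member of the chain not contained in `U`. The map induced
by `T` on `W n ⧸ (U ⊓ W n)` has an eigenvector, since `k` is algebraically closed; any lift `v` of
it lies outside `U` and `U ⊔ k ∙ v` is again invariant, which makes the basis triangular. Choosing
the first `W n` each time ensures that every `W n` is eventually exhausted: otherwise infinitely
many of the (independent) chosen vectors would lie in the finite-dimensional space `W n`.
-/

universe u v

open Submodule Set

variable {k V : Type*} [Field k] [AddCommGroup V] [Module k V]

theorem linearIndependent_of_notMem_span_image_Iio {v : ℕ → V}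
    (hv : ∀ i, v i ∉ span k (v '' Iio i)) : LinearIndependent k v := by
  have hIio : ∀ n, LinearIndepOn k v (Iio n) := by
    intro n
    induction n with
    | zero => simp
    | succ n ih =>
      rw [← Order.succ_eq_add_one, Order.Iio_succ, ← Iio_insert]
      exact ih.insert (hv n)
  rw [← linearIndepOn_univ_iff, ← iUnion_Iio]
  exact linearIndepOn_iUnion_of_directed (Monotone.directed_le fun _ _ ↦ Iio_subset_Iio) hIio

theorem LinearIndependent.span_range_eq_top_of_not_le_imp_mem {v : ℕ → V}
    (hv : LinearIndependent k v)
    {W : ℕ → Submodule k V} (hWfd : ∀ n, FiniteDimensional k (W n)) (hW : ⨆ n, W n = ⊤)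
    (hvW : ∀ m i, ¬ W m ≤ span k (v '' Iio i) → v i ∈ W m) :
    span k (range v) = ⊤ := by
  refine top_unique (hW ▸ iSup_le fun m ↦ ?_)
  by_contra hm
  have hvm : ∀ i, v i ∈ W m := fun i ↦
    hvW m i fun h ↦ hm (h.trans (span_mono (image_subset_range v _)))
  have := hWfd m
  have hv' : LinearIndependent k fun i ↦ (⟨v i, hvm i⟩ : W m) := .of_comp (W m).subtype hv
  have : Finite ℕ := hv'.finite_of_isNoetherian
  exact not_finite ℕ

theorem Module.End.exists_sup_span_singleton_mem_invtSubmodule [IsAlgClosed k]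
    (T : Module.End k V) {U M : Submodule k V} [FiniteDimensional k M]
    (hU : U ∈ T.invtSubmodule) (hM : M ∈ T.invtSubmodule) (hMU : ¬ M ≤ U) :
    ∃ v ∈ M, v ∉ U ∧ U ⊔ span k {v} ∈ T.invtSubmodule := by
  set f := T.restrict ((T.mem_invtSubmodule_iff_forall_mem_of_mem).1 hM)
  set U' := U.comap M.subtype
  have hU' : U' ≤ U'.comap f := fun x hx ↦ hU hx
  have : Nontrivial (M ⧸ U') :=
    Quotient.nontrivial_iff.2 fun h ↦ hMU (comap_subtype_eq_top.1 h)
  obtain ⟨c, hc⟩ := Module.End.exists_eigenvalue (U'.mapQ U' f hU')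
  obtain ⟨q, hq⟩ := hc.exists_hasEigenvector
  obtain ⟨x, rfl⟩ := U'.mkQ_surjective q
  have hx : T x - c • x ∈ U := by
    have := hq.apply_eq_smul
    rwa [mkQ_apply, mapQ_apply, ← Quotient.mk_smul, Submodule.Quotient.eq] at this
  refine ⟨x, x.2, fun h ↦ hq.2 ((Quotient.mk_eq_zero _).2 h), ?_⟩
  refine T.mem_invtSubmodule.2 (sup_le (hU.trans (comap_mono le_sup_left)) ?_)
  rw [span_le, singleton_subset_iff]
  simpa using add_mem_sup hx (smul_mem _ c (mem_span_singleton_self (x : V)))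

theorem exists_not_le_of_iSup_eq_top {W : ℕ → Submodule k V} (hW : ⨆ n, W n = ⊤)
    (hV : ¬ FiniteDimensional k V) (U : Submodule k V) [FiniteDimensional k U] :
    ∃ n, ¬ W n ≤ U := by
  by_contra! h
  have hU : U = ⊤ := top_unique (hW ▸ iSup_le h)
  exact hV (Module.Finite.equiv (hU ▸ Submodule.topEquiv : U ≃ₗ[k] V))

section GreedyFlag

variable (T : Module.End k V) (W : ℕ → Submodule k V)

/-- When no admissible vector exists, `Classical.epsilon` returns a junk value; the hypotheses of
`greedyVector_spec` rule this out. -/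
noncomputable def greedyVector (U : Submodule k V) : V :=
  Classical.epsilon fun v ↦
    v ∈ W (sInf {n | ¬ W n ≤ U}) ∧ v ∉ U ∧ U ⊔ span k {v} ∈ T.invtSubmodule

noncomputable def greedyFlag : ℕ → Submodule k V
  | 0 => ⊥
  | i + 1 => greedyFlag i ⊔ span k {greedyVector T W (greedyFlag i)}

noncomputable def greedySeq (i : ℕ) : V :=
  greedyVector T W (greedyFlag T W i)

theorem greedyFlag_succ (i : ℕ) :
    greedyFlag T W (i + 1) = greedyFlag T W i ⊔ span k {greedySeq T W i} :=
  rfl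

theorem greedyFlag_eq_span (i : ℕ) : greedyFlag T W i = span k (greedySeq T W '' Iio i) := by
  induction i with
  | zero => simp [greedyFlag]
  | succ i ih =>
    rw [greedyFlag_succ, ih, ← Order.succ_eq_add_one, Order.Iio_succ, ← Iio_insert,
      image_insert_eq, span_insert, sup_comm]

theorem greedyFlag_succ_eq_span (i : ℕ) :
    greedyFlag T W (i + 1) = span k (greedySeq T W '' Iic i) := by
  rw [greedyFlag_eq_span, ← Order.succ_eq_add_one, Order.Iio_succ]

instance (i : ℕ) : FiniteDimensional k (greedyFlag T W i) :=
  greedyFlag_eq_span T W i ▸ FiniteDimensional.span_of_finite k ((finite_Iio i).image _)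

variable {T W} [IsAlgClosed k]

theorem greedyVector_spec (hWfd : ∀ n, FiniteDimensional k (W n))
    (hWinv : ∀ n, W n ∈ T.invtSubmodule) {U : Submodule k V} (hU : U ∈ T.invtSubmodule)
    (hUW : ∃ n, ¬ W n ≤ U) :
    greedyVector T W U ∈ W (sInf {n | ¬ W n ≤ U}) ∧ greedyVector T W U ∉ U ∧
      U ⊔ span k {greedyVector T W U} ∈ T.invtSubmodule :=
  have := hWfd (sInf {n | ¬ W n ≤ U})
  Classical.epsilon_spec <|
    T.exists_sup_span_singleton_mem_invtSubmodule hU (hWinv _) (Nat.sInf_mem hUW)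

theorem greedySeq_spec (hWfd : ∀ n, FiniteDimensional k (W n))
    (hWinv : ∀ n, W n ∈ T.invtSubmodule) (hW : ⨆ n, W n = ⊤) (hV : ¬ FiniteDimensional k V)
    {i : ℕ} (hi : greedyFlag T W i ∈ T.invtSubmodule) :
    greedySeq T W i ∈ W (sInf {n | ¬ W n ≤ greedyFlag T W i}) ∧
      greedySeq T W i ∉ greedyFlag T W i ∧ greedyFlag T W (i + 1) ∈ T.invtSubmodule :=
  greedyVector_spec hWfd hWinv hi (exists_not_le_of_iSup_eq_top hW hV _)

theorem greedyFlag_mem_invtSubmodule (hWfd : ∀ n, FiniteDimensional k (W n))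
    (hWinv : ∀ n, W n ∈ T.invtSubmodule) (hW : ⨆ n, W n = ⊤) (hV : ¬ FiniteDimensional k V)
    (i : ℕ) : greedyFlag T W i ∈ T.invtSubmodule := by
  induction i with
  | zero => exact Module.End.invtSubmodule.bot_mem T
  | succ i ih => exact (greedySeq_spec hWfd hWinv hW hV ih).2.2

theorem greedySeq_notMem_span (hWfd : ∀ n, FiniteDimensional k (W n))
    (hWinv : ∀ n, W n ∈ T.invtSubmodule) (hW : ⨆ n, W n = ⊤) (hV : ¬ FiniteDimensional k V)
    (i : ℕ) : greedySeq T W i ∉ span k (greedySeq T W '' Iio i) :=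
  greedyFlag_eq_span T W i ▸
    (greedySeq_spec hWfd hWinv hW hV (greedyFlag_mem_invtSubmodule hWfd hWinv hW hV i)).2.1

theorem greedySeq_mem_of_not_le (hWmono : Monotone W) (hWfd : ∀ n, FiniteDimensional k (W n))
    (hWinv : ∀ n, W n ∈ T.invtSubmodule) (hW : ⨆ n, W n = ⊤) (hV : ¬ FiniteDimensional k V)
    {m i : ℕ} (hm : ¬ W m ≤ span k (greedySeq T W '' Iio i)) : greedySeq T W i ∈ W m :=
  hWmono (Nat.sInf_le (greedyFlag_eq_span T W i ▸ hm))
    (greedySeq_spec hWfd hWinv hW hV (greedyFlag_mem_invtSubmodule hWfd hWinv hW hV i)).1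

theorem apply_greedySeq_mem_span (hWfd : ∀ n, FiniteDimensional k (W n))
    (hWinv : ∀ n, W n ∈ T.invtSubmodule) (hW : ⨆ n, W n = ⊤) (hV : ¬ FiniteDimensional k V)
    (i : ℕ) : T (greedySeq T W i) ∈ span k (greedySeq T W '' Iic i) := by
  rw [← greedyFlag_succ_eq_span]
  refine greedyFlag_mem_invtSubmodule hWfd hWinv hW hV (i + 1) ?_
  rw [greedyFlag_succ]
  exact mem_sup_right (mem_span_singleton_self _)

end GreedyFlag

/-- over an algebraically closed field, if a countably infinite dimensional vector
space `V` is the union of an increasing chain of finite-dimensional `T`-invariant subspaces,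
then `V` has a basis `(vᵢ)_{i∈ℕ}` with respect to which `T` is triangular. -/
theorem stmt7 (k : Type u) (V : Type v) [Field k] [IsAlgClosed k]
    [AddCommGroup V] [Module k V] (T : V →ₗ[k] V)
    (W : ℕ → Submodule k V) (hmono : Monotone W)
    (hfd : ∀ n, FiniteDimensional k (W n))
    (hinv : ∀ n, ∀ x ∈ W n, T x ∈ W n)
    (hunion : ⨆ n, W n = ⊤)
    (hrank : Module.rank k V = Cardinal.aleph0) :
    ∃ b : Module.Basis ℕ k V, ∀ i : ℕ, T (b i) ∈ Submodule.span k (b '' Set.Iic i) := by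
  have hV : ¬ FiniteDimensional k V := fun h ↦ (Module.rank_lt_aleph0_iff.2 h).ne hrank
  have hli := linearIndependent_of_notMem_span_image_Iio (greedySeq_notMem_span hfd hinv hunion hV)
  have hspan := hli.span_range_eq_top_of_not_le_imp_mem hfd hunion
    fun _ _ ↦ greedySeq_mem_of_not_le hmono hfd hinv hunion hV
  refine ⟨.mk hli hspan.ge, fun i ↦ ?_⟩
  rw [Module.Basis.coe_mk]
  exact apply_greedySeq_mem_span hfd hinv hunion hV i
end

section
/- Every additive subsemigroup N of the positive natural numbers is finitely generated: there exist n₁, ..., n_r ∈ N such that every element of N is a sum (with repetitions allowed) of elements from {n₁, ..., n_r}. -/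
/-- every additive subsemigroup of the positive natural numbers is finitely
generated: there is a finite subset `F ⊆ N` such that every element of `N` lies in the
additive subsemigroup generated by `F`. -/
theorem stmt8 (N : Set ℕ) (hpos : ∀ n ∈ N, 0 < n)
    (hadd : ∀ a ∈ N, ∀ b ∈ N, a + b ∈ N) :
    ∃ F : Finset ℕ, ↑F ⊆ N ∧ ∀ n ∈ N, n ∈ AddSubsemigroup.closure (F : Set ℕ) := by
  classical
  rcases Set.eq_empty_or_nonempty N with hN | ⟨a, ha⟩
  · exact ⟨∅, by simp, by simp [hN]⟩
  have hapos : 0 < a := hpos a ha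
  -- for each residue r, least element of N congruent to r mod a
  set m : ℕ → ℕ := fun r => sInf {n | n ∈ N ∧ n % a = r} with hm
  refine ⟨insert a (((Finset.range a).image m).filter (· ∈ N)), ?_, ?_⟩
  · intro x hx
    simp only [Finset.coe_insert, Set.mem_insert_iff, Finset.coe_filter,
      Set.mem_setOf_eq] at hx
    rcases hx with rfl | ⟨_, hx⟩
    · exact ha
    · exact hx
  · intro n hn
    set F : Finset ℕ := insert a (((Finset.range a).image m).filter (· ∈ N)) with hF
    have haF : a ∈ (F : Set ℕ) := by simp [hF]
    set r := n % a with hr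
    have hne : {x | x ∈ N ∧ x % a = r}.Nonempty := ⟨n, hn, rfl⟩
    have hmr := Nat.sInf_mem hne
    obtain ⟨hmrN, hmrmod⟩ := hmr
    have hmrF : m r ∈ (F : Set ℕ) := by
      simp only [hF, Finset.coe_insert, Set.mem_insert_iff, Finset.coe_filter,
        Set.mem_setOf_eq]
      right
      refine ⟨Finset.mem_image.mpr ⟨r, ?_, rfl⟩, hmrN⟩
      exact Finset.mem_range.mpr (Nat.mod_lt n hapos)
    have hle : m r ≤ n := Nat.sInf_le ⟨hn, rfl⟩
    have hmod : m r ≡ n [MOD a] := hmrmod.trans hr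
    obtain ⟨k, hk⟩ := (Nat.modEq_iff_dvd' hle).mp hmod
    have hk2 : n - m r = a * k := hk
    have hn' : n = m r + k * a := by
      have h := (Nat.sub_eq_iff_eq_add hle).mp hk
      rw [h, Nat.mul_comm, Nat.add_comm]
    rw [hn']
    clear hn' hk hk2 hle hn hmod
    induction k with
    | zero => simpa using AddSubsemigroup.subset_closure hmrF
    | succ j ih =>
      have : m r + (j + 1) * a = (m r + j * a) + a := by ring
      rw [this]
      exact AddSubsemigroup.add_mem _ ih (AddSubsemigroup.subset_closure haF)
end

section
/- Let D be a division ring and let δ be a derivation of D. In the differential polynomial ring S = D[x; δ] (where xa = ax + δ(a) for a ∈ D), every nonzero two-sided ideal I contains a nonzero central element of S; more precisely, a monic element of I of minimal degree is central in S. -/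
universe u v

variable {D : Type u} [DivisionRing D] {S : Type v} [Ring S]

def repHom (i : D →+* S) (x : S) : (ℕ →₀ D) →+ S where
  toFun c := c.sum fun n a => i a * x ^ n
  map_zero' := Finsupp.sum_zero_index
  map_add' c d := by
    show (c + d).sum (fun n a => i a * x ^ n) = _
    exact Finsupp.sum_add_index' (fun n => by simp) (fun n a b => by rw [map_add, add_mul])

lemma repHom_apply (i : D →+* S) (x : S) (c : ℕ →₀ D) :
    repHom i x c = c.sum fun n a => i a * x ^ n := rfl

lemma rep_single (i : D →+* S) (x : S) (n : ℕ) (a : D) :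
    repHom i x (Finsupp.single n a) = i a * x ^ n := by
  rw [repHom_apply]; exact Finsupp.sum_single_index (by simp)

lemma rep_smul (i : D →+* S) (x : S) (a : D) (c : ℕ →₀ D) :
    repHom i x (a • c) = i a * repHom i x c := by
  rw [repHom_apply, repHom_apply, Finsupp.sum_smul_index (fun n => by simp), Finsupp.mul_sum]
  exact Finsupp.sum_congr fun n _ => by rw [map_mul, mul_assoc]

lemma rep_mulx (i : D →+* S) (x : S) (c : ℕ →₀ D) :
    repHom i x c * x = repHom i x (c.mapDomain (· + 1)) := by
  rw [repHom_apply, repHom_apply,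
    Finsupp.sum_mapDomain_index (fun _ => by simp) (fun n b₁ b₂ => by rw [map_add, add_mul]),
    Finsupp.sum_mul]
  exact Finsupp.sum_congr fun n _ => by rw [mul_assoc, pow_succ]

variable (δ : D →+ D)

lemma rep_xmul (i : D →+* S) (x : S) (hcomm : ∀ a : D, x * i a = i a * x + i (δ a)) (c : ℕ →₀ D) :
    x * repHom i x c = repHom i x (c.mapDomain (· + 1) + c.mapRange δ δ.map_zero) := by
  rw [map_add, ← rep_mulx, repHom_apply (c := c.mapRange δ δ.map_zero),
    Finsupp.sum_mapRange_index (fun _ => by simp), repHom_apply, Finsupp.mul_sum,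
    Finsupp.sum_mul, ← Finsupp.sum_add]
  refine Finsupp.sum_congr fun n _ => ?_
  rw [← mul_assoc, hcomm, add_mul, mul_assoc, mul_assoc, ← pow_succ', pow_succ]

lemma mapD_apply_succ (c : ℕ →₀ D) (n : ℕ) : (c.mapDomain (· + 1)) (n + 1) = c n :=
  Finsupp.mapDomain_apply (fun a b h => by omega) c n

lemma mapD_apply_zero (c : ℕ →₀ D) : (c.mapDomain (· + 1)) 0 = 0 :=
  Finsupp.mapDomain_notin_range _ _ (by simp)

lemma monomial_mul_const (i : D →+* S) (x : S)
    (hcomm : ∀ a : D, x * i a = i a * x + i (δ a)) (k : ℕ) (a : D) :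
    ∃ d : ℕ →₀ D, repHom i x d = x ^ k * i a ∧ d k = a ∧ ∀ m, k < m → d m = 0 := by
  induction k with
  | zero =>
    refine ⟨Finsupp.single 0 a, by rw [rep_single]; simp, by simp, fun m hm => ?_⟩
    rw [Finsupp.single_apply, if_neg (by omega)]
  | succ k ih =>
    obtain ⟨d, hd, hdk, hdm⟩ := ih
    refine ⟨d.mapDomain (· + 1) + d.mapRange δ δ.map_zero, ?_, ?_, ?_⟩
    · rw [← rep_xmul δ i x hcomm, hd, ← mul_assoc, ← pow_succ']
    · rw [Finsupp.add_apply, mapD_apply_succ, Finsupp.mapRange_apply, hdm (k + 1) (by omega),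
        map_zero, add_zero, hdk]
    · intro m hm
      match m, hm with
      | m + 1, hm =>
        rw [Finsupp.add_apply, mapD_apply_succ, Finsupp.mapRange_apply, hdm (m + 1) (by omega),
          hdm m (by omega), map_zero, add_zero]

lemma key (i : D →+* S) (x : S)
    (hδ : ∀ a b : D, δ (a * b) = a * δ b + δ a * b)
    (hcomm : ∀ a : D, x * i a = i a * x + i (δ a))
    (hsurj : Function.Surjective (repHom i x))
    (I : TwoSidedIdeal S) (f : S) (hf : f ∈ I) (c : ℕ →₀ D) (n : ℕ)
    (hcf : repHom i x c = f) (hc1 : c n = 1) (hctop : ∀ m, n < m → c m = 0)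
    (hmin : ∀ g ∈ I, g ≠ 0 → ∀ d : ℕ →₀ D, repHom i x d = g → ∃ m ∈ d.support, n ≤ m) :
    ∀ s : S, f * s = s * f := by
  have hδ1 : δ (1 : D) = 0 := by
    have h := hδ 1 1
    rw [one_mul, one_mul, mul_one] at h
    exact (left_eq_add.mp h)
  have hsupp : ∀ m ∈ c.support, m ≤ n := by
    intro m hm
    by_contra hmn
    exact (Finsupp.mem_support_iff.mp hm) (hctop m (by omega))
  -- commutes with constants
  have haf : ∀ a : D, f * i a = i a * f := by
    intro a
    set dfun : ℕ → (ℕ →₀ D) := fun m => (monomial_mul_const δ i x hcomm m a).choose with hdfun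
    have hdspec : ∀ m, repHom i x (dfun m) = x ^ m * i a ∧ (dfun m) m = a ∧
        ∀ k, m < k → (dfun m) k = 0 := fun m => (monomial_mul_const δ i x hcomm m a).choose_spec
    set E : ℕ →₀ D := c.sum fun m b => b • dfun m with hEdef
    have hE : repHom i x E = f * i a := by
      rw [hEdef, map_finsuppSum, ← hcf, repHom_apply, Finsupp.sum_mul]
      refine Finsupp.sum_congr fun m _ => ?_
      rw [rep_smul, (hdspec m).1, ← mul_assoc]
    have hEk : ∀ k, n ≤ k → E k = if k = n then a else 0 := by
      intro k hk
      rw [hEdef, Finsupp.sum_apply, Finsupp.sum]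
      rcases eq_or_lt_of_le hk with h | h
      · rw [if_pos h.symm]
        refine Finset.sum_eq_single_of_mem n (Finsupp.mem_support_iff.mpr (by rw [hc1]; exact one_ne_zero)) ?_ |>.trans ?_
        · intro m hm hmn
          have : m < n := lt_of_le_of_ne (hsupp m hm) hmn
          rw [Finsupp.smul_apply, ← h, (hdspec m).2.2 n this, smul_zero]
        · rw [Finsupp.smul_apply, ← h, (hdspec n).2.1, hc1, one_smul]
      · rw [if_neg (by omega)]
        refine Finset.sum_eq_zero fun m hm => ?_
        rw [Finsupp.smul_apply, (hdspec m).2.2 k (lt_of_le_of_lt (hsupp m hm) h), smul_zero]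
    by_contra hne
    have hsub : f * i a - i a * f ∈ I := I.sub_mem (I.mul_mem_right _ _ hf) (I.mul_mem_left _ _ hf)
    have hrepsub : repHom i x (E - a • c) = f * i a - i a * f := by
      rw [map_sub, hE, rep_smul, hcf]
    obtain ⟨m, hm, hnm⟩ := hmin _ hsub (sub_ne_zero.mpr hne) _ hrepsub
    apply Finsupp.mem_support_iff.mp hm
    rw [Finsupp.sub_apply, Finsupp.smul_apply, hEk m hnm]
    rcases eq_or_lt_of_le hnm with h | h
    · rw [if_pos h.symm, ← h, hc1, smul_eq_mul, mul_one, sub_self]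
    · rw [if_neg (by omega), hctop m h, smul_zero, sub_self]
  -- commutes with x
  have hfx : f * x = x * f := by
    by_contra hne
    have hsub : f * x - x * f ∈ I := I.sub_mem (I.mul_mem_right _ _ hf) (I.mul_mem_left _ _ hf)
    have hrepsub : repHom i x (-(c.mapRange δ δ.map_zero)) = f * x - x * f := by
      rw [map_neg, ← hcf, rep_mulx, rep_xmul δ i x hcomm, map_add, neg_eq_iff_eq_neg]
      abel
    obtain ⟨m, hm, hnm⟩ := hmin _ hsub (sub_ne_zero.mpr hne) _ hrepsub
    apply Finsupp.mem_support_iff.mp hm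
    rw [Finsupp.neg_apply, Finsupp.mapRange_apply, neg_eq_zero]
    rcases eq_or_lt_of_le hnm with h | h
    · rw [← h, hc1, hδ1]
    · rw [hctop m h, map_zero]
  -- conclude
  intro s
  obtain ⟨d, rfl⟩ := hsurj s
  rw [repHom_apply, Finsupp.mul_sum, Finsupp.sum_mul]
  refine Finsupp.sum_congr fun m _ => ?_
  have h1 : Commute f (x ^ m) := (Commute.pow_right hfx m)
  rw [← mul_assoc, haf (d m), mul_assoc, h1.eq, ← mul_assoc]


/-- let `D` be a division ring with a derivation `δ`, and let `S = D[x; δ]` be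
the differential polynomial ring (encoded abstractly: `i : D →+* S`, an element `x` with
`x·a = a·x + δ(a)`, and unique representation of elements as `Σ aₙ xⁿ`).  Then every nonzero
two-sided ideal of `S` contains a nonzero central element; more precisely, any monic element
of minimal degree in the ideal is central. -/
theorem stmt15 (D : Type u) [DivisionRing D] (δ : D →+ D)
    (hδ : ∀ a b : D, δ (a * b) = a * δ b + δ a * b)
    (S : Type v) [Ring S] (i : D →+* S) (x : S)
    (hcomm : ∀ a : D, x * i a = i a * x + i (δ a))
    (hrep : Function.Bijective fun c : ℕ →₀ D => c.sum fun n a => i a * x ^ n) :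
    ∀ I : TwoSidedIdeal S,
      (I ≠ ⊥ → ∃ z ∈ I, z ≠ 0 ∧ ∀ s : S, z * s = s * z) ∧
      (∀ f ∈ I, ∀ (c : ℕ →₀ D) (n : ℕ),
        (c.sum fun m a => i a * x ^ m) = f →
        c n = 1 → (∀ m : ℕ, n < m → c m = 0) →
        (∀ g ∈ I, g ≠ 0 → ∀ d : ℕ →₀ D,
          (d.sum fun m a => i a * x ^ m) = g → ∃ m ∈ d.support, n ≤ m) →
        ∀ s : S, f * s = s * f) := by
  classical
  have hrep' : Function.Bijective (repHom i x) := hrep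
  have hne0 : ∀ d : ℕ →₀ D, repHom i x d ≠ 0 → d ≠ 0 := by
    rintro d h rfl; exact h (map_zero _)
  intro I
  constructor
  · intro hI
    have hex : ∃ g, g ∈ I ∧ g ≠ 0 := by
      by_contra h
      push_neg at h
      exact hI (eq_bot_iff.mpr fun z hz => by simpa using h z hz)
    have hP : ∃ n : ℕ, ∃ d : ℕ →₀ D, repHom i x d ∈ I ∧ d n ≠ 0 ∧ ∀ m, n < m → d m = 0 := by
      obtain ⟨g, hgI, hg0⟩ := hex
      obtain ⟨d, hd⟩ := hrep'.2 g
      have hdne : d.support.Nonempty :=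
        Finsupp.support_nonempty_iff.mpr (hne0 d (by rw [hd]; exact hg0))
      refine ⟨d.support.max' hdne, d, by rw [hd]; exact hgI,
        Finsupp.mem_support_iff.mp (d.support.max'_mem hdne), fun m hm => ?_⟩
      by_contra hdm
      exact absurd (d.support.le_max' m (Finsupp.mem_support_iff.mpr hdm)) (by omega)
    set n := Nat.find hP with hn
    obtain ⟨d, hdI, hdn, hdtop⟩ := Nat.find_spec hP
    set c : ℕ →₀ D := (d n)⁻¹ • d with hcdef
    have hc1 : c n = 1 := by
      rw [hcdef, Finsupp.smul_apply, smul_eq_mul, inv_mul_cancel₀ hdn]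
    have hctop : ∀ m, n < m → c m = 0 := fun m hm => by
      rw [hcdef, Finsupp.smul_apply, hdtop m hm, smul_zero]
    have hzI : repHom i x c ∈ I := by
      rw [hcdef, rep_smul]
      exact I.mul_mem_left _ _ hdI
    have hz0 : repHom i x c ≠ 0 := by
      intro h0
      have hc0 : c = 0 := hrep'.1 (by rw [h0, map_zero])
      rw [hc0] at hc1
      exact one_ne_zero hc1.symm
    have hmin : ∀ g ∈ I, g ≠ 0 → ∀ d' : ℕ →₀ D, repHom i x d' = g → ∃ m ∈ d'.support, n ≤ m := by
      intro g hgI hg0 d' hd'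
      have hdne : d'.support.Nonempty :=
        Finsupp.support_nonempty_iff.mpr (hne0 d' (by rw [hd']; exact hg0))
      refine ⟨d'.support.max' hdne, d'.support.max'_mem hdne, Nat.find_min' hP ?_⟩
      refine ⟨d', by rw [hd']; exact hgI,
        Finsupp.mem_support_iff.mp (d'.support.max'_mem hdne), fun m hm => ?_⟩
      by_contra hdm
      exact absurd (d'.support.le_max' m (Finsupp.mem_support_iff.mpr hdm)) (by omega)
    exact ⟨repHom i x c, hzI, hz0,
      key δ i x hδ hcomm hrep'.2 I _ hzI c n rfl hc1 hctop hmin⟩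
  · intro f hfI c n hcf hc1 hctop hmin
    exact key δ i x hδ hcomm hrep'.2 I f hfI c n hcf hc1 hctop hmin
end

section
/- Let B be a prime ring, let Q be an overring of B in which every nonzero regular element of B is invertible (e.g., Q is the Goldie quotient ring of B), and let Z be a subring of the center of Q such that for every z ∈ Z there exists a regular element c ∈ B with zc ∈ B. Then the subring BZ of Q generated by B and Z is a prime ring. -/
universe u

/-- let `B` be a prime subring of a ring `Q` in which every regular element of
`B` is invertible, and let `Z` be a central subring of `Q` such that each `z ∈ Z` has a common
denominator `c ∈ B` regular with `z·c ∈ B`. Then the subring `BZ` generated by `B` and `Z` is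
prime. -/
theorem stmt16 (Q : Type u) [Ring Q] (B : Subring Q)
    (hBprime : ∀ a ∈ B, ∀ b ∈ B, (∀ r ∈ B, a * r * b = 0) → a = 0 ∨ b = 0)
    (hreg : ∀ c ∈ B, c ≠ 0 → (∀ b ∈ B, (c * b = 0 → b = 0) ∧ (b * c = 0 → b = 0)) → IsUnit c)
    (Z : Subring Q) (hZ : Z ≤ Subring.center Q)
    (hdenom : ∀ z ∈ Z, ∃ c ∈ B,
      (∀ b ∈ B, (c * b = 0 → b = 0) ∧ (b * c = 0 → b = 0)) ∧ z * c ∈ B) :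
    ∀ a ∈ B ⊔ Z, ∀ b ∈ B ⊔ Z, (∀ r ∈ B ⊔ Z, a * r * b = 0) → a = 0 ∨ b = 0 := by
  have reg1 : ∀ b ∈ B, ((1:Q) * b = 0 → b = 0) ∧ (b * 1 = 0 → b = 0) := by
    intro b _; constructor <;> intro h <;> simpa using h
  -- the subring of elements with a common right denominator
  let S : Subring Q :=
    { carrier := {x | ∃ c ∈ B, (∀ b ∈ B, (c * b = 0 → b = 0) ∧ (b * c = 0 → b = 0)) ∧
        ∀ u ∈ B, x * u * c ∈ B}
      one_mem' := ⟨1, B.one_mem, reg1, fun u hu => by simpa using hu⟩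
      zero_mem' := ⟨1, B.one_mem, reg1, fun u hu => by simpa using B.zero_mem⟩
      add_mem' := by
        rintro x y ⟨c, hc, hcreg, hxc⟩ ⟨d, hd, hdreg, hyd⟩
        refine ⟨c * d, B.mul_mem hc hd, ?_, ?_⟩
        · intro b hb
          constructor
          · intro h
            rw [mul_assoc] at h
            exact (hdreg b hb).1 ((hcreg (d * b) (B.mul_mem hd hb)).1 h)
          · intro h
            rw [← mul_assoc] at h
            exact (hcreg b hb).2 ((hdreg (b * c) (B.mul_mem hb hc)).2 h)
        · intro u hu
          have h1 : x * u * c * d ∈ B := B.mul_mem (hxc u hu) hd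
          have h2 : y * (u * c) * d ∈ B := hyd (u * c) (B.mul_mem hu hc)
          have : (x + y) * u * (c * d) = x * u * c * d + y * (u * c) * d := by
            noncomm_ring
          rw [this]; exact B.add_mem h1 h2
      neg_mem' := by
        rintro x ⟨c, hc, hcreg, hxc⟩
        exact ⟨c, hc, hcreg, fun u hu => by
          have : -x * u * c = -(x * u * c) := by noncomm_ring
          rw [this]; exact B.neg_mem (hxc u hu)⟩
      mul_mem' := by
        rintro x y ⟨c, hc, hcreg, hxc⟩ ⟨d, hd, hdreg, hyd⟩
        refine ⟨d * c, B.mul_mem hd hc, ?_, ?_⟩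
        · intro b hb
          constructor
          · intro h
            rw [mul_assoc] at h
            exact (hcreg b hb).1 ((hdreg (c * b) (B.mul_mem hc hb)).1 h)
          · intro h
            rw [← mul_assoc] at h
            exact (hdreg b hb).2 ((hcreg (b * d) (B.mul_mem hb hd)).2 h)
        · intro u hu
          have h2 : y * u * d ∈ B := hyd u hu
          have h1 : x * (y * u * d) * c ∈ B := hxc _ h2
          have : x * y * u * (d * c) = x * (y * u * d) * c := by noncomm_ring
          rw [this]; exact h1 }
  have hBS : B ≤ S := by
    intro x hx
    exact ⟨1, B.one_mem, reg1, fun u hu => by simpa using B.mul_mem hx hu⟩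
  have hZS : Z ≤ S := by
    intro z hz
    obtain ⟨c, hc, hcreg, hzc⟩ := hdenom z hz
    refine ⟨c, hc, hcreg, fun u hu => ?_⟩
    have hcen : ∀ g : Q, g * z = z * g := fun g =>
      Subring.mem_center_iff.mp (hZ hz) g
    have : z * u * c = u * (z * c) := by rw [← hcen u, mul_assoc]
    rw [this]; exact B.mul_mem hu hzc
  have key : B ⊔ Z ≤ S := sup_le hBS hZS
  -- a regular element killing something on the right kills it
  have cancel : ∀ c ∈ B, (∀ b ∈ B, (c * b = 0 → b = 0) ∧ (b * c = 0 → b = 0)) →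
      ∀ x : Q, x * c = 0 → x = 0 := by
    intro c hc hcreg x hx
    by_cases hc0 : c = 0
    · have h1 : (1 : Q) = 0 := (hcreg 1 B.one_mem).1 (by rw [hc0, zero_mul])
      calc x = x * 1 := (mul_one x).symm
        _ = x * 0 := by rw [h1]
        _ = 0 := mul_zero x
    · obtain ⟨u, hu⟩ := hreg c hc hc0 hcreg
      have := congrArg (· * ((u⁻¹ : Qˣ) : Q)) hx
      simpa [← hu, mul_assoc] using this
  intro a ha b hb hab
  obtain ⟨c, hc, hcreg, hac⟩ := key ha
  obtain ⟨d, hd, hdreg, hbd⟩ := key hb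
  have hacB : a * c ∈ B := by simpa using hac 1 B.one_mem
  have hbdB : b * d ∈ B := by simpa using hbd 1 B.one_mem
  have h0 : ∀ r ∈ B, (a * c) * r * (b * d) = 0 := by
    intro r hr
    have hcr : c * r ∈ (B ⊔ Z : Subring Q) :=
      (le_sup_left : B ≤ B ⊔ Z) (B.mul_mem hc hr)
    have := hab (c * r) hcr
    calc (a * c) * r * (b * d) = (a * (c * r) * b) * d := by noncomm_ring
      _ = 0 * d := by rw [this]
      _ = 0 := zero_mul d
  rcases hBprime (a * c) hacB (b * d) hbdB h0 with h | h
  · exact Or.inl (cancel c hc hcreg a h)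
  · exact Or.inr (cancel d hd hdreg b h)
end
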